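/- arXiv:1705.10833 — 7 statements merged into one kernel-verified Lean document; each statement's English description precedes it below -/
import Mathlib

section
/- Let D be a finite distributive lattice with exactly two coatoms c_ℓ and c_r, both of which are join-reducible, and let e = c_ℓ ∧ c_r. Then e is covered by c_ℓ and e is covered by c_r. -/
def JoinReducible {D : Type*} [Lattice D] (c : D) : Prop :=
  ∃ a b : D, a < c ∧ b < c ∧ a ⊔ b = c

theorem IsCoatom.inf_covBy_of_ne {α : Type*} [Lattice α] [OrderTop α] [IsLowerModularLattice α]
    {a b : α} (ha : IsCoatom a) (hb : IsCoatom b) (hab : a ≠ b) : a ⊓ b ⋖ a := by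
  have hsup : b ⋖ b ⊔ a := by
    rw [hb.sup_eq_top_of_ne ha hab.symm]
    exact hb.covBy_top
  rw [inf_comm]
  exact inf_covBy_of_covBy_sup_left hsup

theorem stmt_2_general {D : Type*} [DistribLattice D] [BoundedOrder D]
    (cl cr : D) (hne : cl ≠ cr) (hcl : IsCoatom cl) (hcr : IsCoatom cr) :
    (cl ⊓ cr) ⋖ cl ∧ (cl ⊓ cr) ⋖ cr :=
  ⟨hcl.inf_covBy_of_ne hcr hne, inf_comm cl cr ▸ hcr.inf_covBy_of_ne hcl hne.symm⟩

/-- If a finite distributive lattice has exactly two coatoms `cl` and `cr`, both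
join-reducible, and `e = cl ⊓ cr`, then `e ⋖ cl` and `e ⋖ cr`. -/
theorem stmt_2 {D : Type*} [DistribLattice D] [Fintype D] [BoundedOrder D]
    (cl cr : D) (hne : cl ≠ cr) (hcl : IsCoatom cl) (hcr : IsCoatom cr)
    (honly : ∀ x : D, IsCoatom x → x = cl ∨ x = cr)
    (hredl : JoinReducible cl) (hredr : JoinReducible cr) :
    (cl ⊓ cr) ⋖ cl ∧ (cl ⊓ cr) ⋖ cr :=
  stmt_2_general cl cr hne hcl hcr
end

section
/- There is no algebra A such that the ordered set Princ(A) of principal congruences of A is order-isomorphic to the three-element 'V-shaped' poset {0, α, β} with least element 0 and two incomparable maximal elements α and β. -/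
set_option linter.unusedVariables false

/-- A general (finitary, one-sorted) algebra. -/
structure Alg : Type 1 where
  carrier : Type
  ι : Type
  arity : ι → ℕ
  ops : ∀ i : ι, (Fin (arity i) → carrier) → carrier

/-- A congruence of an algebra: an equivalence relation compatible with all operations. -/
def IsCong (A : Alg) (r : A.carrier → A.carrier → Prop) : Prop :=
  Equivalence r ∧ ∀ (i : A.ι) (x y : Fin (A.arity i) → A.carrier),
    (∀ j, r (x j) (y j)) → r (A.ops i x) (A.ops i y)

/-- The congruences of an algebra `A`. -/
def AlgCon (A : Alg) : Type := {r : A.carrier → A.carrier → Prop // IsCong A r}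

instance (A : Alg) : PartialOrder (AlgCon A) where
  le r s := ∀ a b, r.1 a b → s.1 a b
  le_refl r a b h := h
  le_trans r s t h1 h2 a b h := h2 a b (h1 a b h)
  le_antisymm r s h1 h2 := Subtype.ext (by
    funext a b
    exact propext ⟨h1 a b, h2 a b⟩)

instance (A : Alg) : InfSet (AlgCon A) where
  sInf S := ⟨fun a b => ∀ r ∈ S, r.1 a b,
    ⟨⟨fun a r _ => r.2.1.refl a,
      fun h r hr => r.2.1.symm (h r hr),
      fun h1 h2 r hr => r.2.1.trans (h1 r hr) (h2 r hr)⟩,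
     fun i x y h r hr => r.2.2 i x y (fun j => h j r hr)⟩⟩

instance (A : Alg) : CompleteLattice (AlgCon A) :=
  completeLatticeOfInf _ (fun S =>
    ⟨fun r hr a b h => h r hr, fun r hr a b h s hs => hr hs a b h⟩)

/-- The principal congruence generated by the pair `(a, b)`. -/
def algPrinc (A : Alg) (a b : A.carrier) : AlgCon A := sInf {r : AlgCon A | r.1 a b}

/-- The set of principal congruences of `A`. -/
def AlgPrinc (A : Alg) : Set (AlgCon A) := {θ | ∃ a b, θ = algPrinc A a b}

/-- The three-element "V-shaped" poset: a least element and two incomparable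
maximal elements. -/
inductive VPoset : Type
  | zero : VPoset
  | a : VPoset
  | b : VPoset

instance : PartialOrder VPoset where
  le x y := x = y ∨ x = VPoset.zero
  le_refl x := Or.inl rfl
  le_trans x y z h1 h2 := by
    rcases h1 with rfl | rfl
    · exact h2
    · exact Or.inr rfl
  le_antisymm x y h1 h2 := by
    rcases h1 with rfl | rfl
    · rfl
    · rcases h2 with rfl | rfl <;> rfl

/-!
Every element of the V-shaped poset lies below one of its two maximal elements `α`, `β`, so
every pair `(x, y)` is collapsed by `α` or by `β`, i.e. `α ∪ β` is the total relation. But if the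
union of two equivalence relations `r`, `s` is total, one of them already is: a pair `(x, y)` outside `r`
lies in `s`, and every `z` is `s`-related to `x`, directly if `(x, z) ∉ r` and through `y`
otherwise, since then `(y, z) ∉ r`. Hence `α` and `β` are comparable, which they are not.
-/

theorem Equivalence.forall_or_forall_of_forall_or {α : Type*} {r s : α → α → Prop}
    (hr : Equivalence r) (hs : Equivalence s) (h : ∀ x y, r x y ∨ s x y) :
    (∀ x y, r x y) ∨ (∀ x y, s x y) := by
  by_contra! ⟨⟨x, y, hxy⟩, z₀, w₀, hzw₀⟩
  have hsx : ∀ z, s x z := fun z => by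
    by_cases hxz : r x z
    · have hyz : ¬ r y z := fun hyz => hxy (hr.trans hxz (hr.symm hyz))
      exact hs.trans ((h x y).resolve_left hxy) ((h y z).resolve_left hyz)
    · exact (h x z).resolve_left hxz
  exact hzw₀ (hs.trans (hs.symm (hsx z₀)) (hsx w₀))

theorem algPrinc_le_iff {A : Alg} {a b : A.carrier} {θ : AlgCon A} :
    algPrinc A a b ≤ θ ↔ θ.1 a b :=
  ⟨fun h => h a b fun _ hr => hr, fun hab _ _ hxy => hxy θ hab⟩

theorem AlgCon.le_or_le_of_forall_algPrinc_le {A : Alg} {α β : AlgCon A}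
    (h : ∀ a b, algPrinc A a b ≤ α ∨ algPrinc A a b ≤ β) : β ≤ α ∨ α ≤ β := by
  simp only [algPrinc_le_iff] at h
  exact (α.2.1.forall_or_forall_of_forall_or β.2.1 h).imp
    (fun hα x y _ => hα x y) (fun hβ x y _ => hβ x y)

namespace VPoset

theorem le_a_or_le_b (x : VPoset) : x ≤ a ∨ x ≤ b := by
  cases x
  exacts [Or.inl (Or.inr rfl), Or.inl (Or.inl rfl), Or.inr (Or.inl rfl)]

theorem not_a_le_b : ¬ a ≤ b := by
  rintro (h | h) <;> cases h

theorem not_b_le_a : ¬ b ≤ a := by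
  rintro (h | h) <;> cases h

end VPoset

/-- No algebra has its ordered set of principal congruences isomorphic to the
V-shaped three-element poset. -/
theorem stmt_3 (A : Alg) : IsEmpty (↥(AlgPrinc A) ≃o VPoset) := by
  refine ⟨fun f => ?_⟩
  have hcover (x y : A.carrier) :
      algPrinc A x y ≤ f.symm VPoset.a ∨ algPrinc A x y ≤ f.symm VPoset.b := by
    have h := (f ⟨algPrinc A x y, x, y, rfl⟩).le_a_or_le_b
    rwa [← f.le_symm_apply, ← f.le_symm_apply] at h
  rcases AlgCon.le_or_le_of_forall_algPrinc_le hcover with h | h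
  · exact VPoset.not_b_le_a (f.symm.le_iff_le.mp h)
  · exact VPoset.not_a_le_b (f.symm.le_iff_le.mp h)
end

section
/- Let A be an algebra with finite congruence lattice D = Con(A), and suppose D has exactly two coatoms α and β and the top congruence 1 is not a principal congruence of A. Then 1 = α ∪ β as relations on A. -/
set_option linter.unusedVariables false

/-! Since `Con(A)` is finite, every proper congruence lies below a coatom. The principal
congruence `con(a, b)` is proper because `⊤` is not principal, so it lies below `α` or `β`,
and with it the pair `(a, b)`. -/

lemma algPrinc_rel (A : Alg) (a b : A.carrier) : (algPrinc A a b).1 a b :=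
  fun _ hr => hr

lemma le_or_le_of_forall_isCoatom {L : Type*} [PartialOrder L] [OrderTop L] [IsCoatomic L]
    {x α β : L} (hx : x ≠ ⊤) (honly : ∀ γ : L, IsCoatom γ → γ = α ∨ γ = β) :
    x ≤ α ∨ x ≤ β := by
  obtain ⟨γ, hγ, hxγ⟩ := (eq_top_or_exists_le_coatom x).resolve_left hx
  rcases honly γ hγ with rfl | rfl
  exacts [Or.inl hxγ, Or.inr hxγ]

theorem stmt_6_general (A : Alg) [Finite (AlgCon A)] (α β : AlgCon A)
    (honly : ∀ γ : AlgCon A, IsCoatom γ → γ = α ∨ γ = β)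
    (htop : (⊤ : AlgCon A) ∉ AlgPrinc A) :
    ∀ a b : A.carrier, (⊤ : AlgCon A).1 a b ↔ (α.1 a b ∨ β.1 a b) := by
  intro a b
  refine ⟨fun _ => ?_, fun _ => le_top (a := algPrinc A a b) a b (algPrinc_rel A a b)⟩
  have hproper : algPrinc A a b ≠ ⊤ := fun h => htop ⟨a, b, h.symm⟩
  rcases le_or_le_of_forall_isCoatom hproper honly with hle | hle
  exacts [Or.inl (hle a b (algPrinc_rel A a b)), Or.inr (hle a b (algPrinc_rel A a b))]

/-- If the finite congruence lattice of an algebra `A` has exactly two coatoms `α`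
and `β` and the top congruence is not principal, then the top congruence is the
set-theoretic union `α ∪ β`. -/
theorem stmt_6 (A : Alg) [Finite (AlgCon A)] (α β : AlgCon A) (hne : α ≠ β)
    (hα : IsCoatom α) (hβ : IsCoatom β)
    (honly : ∀ γ : AlgCon A, IsCoatom γ → γ = α ∨ γ = β)
    (htop : (⊤ : AlgCon A) ∉ AlgPrinc A) :
    ∀ a b : A.carrier, (⊤ : AlgCon A).1 a b ↔ (α.1 a b ∨ β.1 a b) :=
  stmt_6_general A α β honly htop
end

section
/- Let D be a finite distributive lattice containing a three-element antichain {p_0, p_1, p_2} of join-irreducible elements, let p = p_0 ∨ p_1 ∨ p_2, and let Q = J(D) ∪ {0, 1, p}. Then the inclusion Q ⊆ D is not chain-representable: there is no finite chain C with surjective coloring σ: Prime(C) → J(D) such that {rep(I) : I an interval of C} = Q, where rep(I) = ⋁_{p∈Prime(I)} σ(p). -/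
open scoped Classical

/-- The prime intervals (covering pairs) of an ordered set `C`. -/
abbrev PrimeInt (C : Type) [Preorder C] : Type := {e : C × C // e.1 ⋖ e.2}

/-- The element of `D` represented by the interval `[a, b]` of the colored chain:
the join of the colors of all prime intervals lying inside `[a, b]`. -/
noncomputable def chainRep {C D : Type} [LinearOrder C] [Fintype C]
    [Lattice D] [OrderBot D] (σ : PrimeInt C → D) (a b : C) : D :=
  (Finset.univ.filter (fun e : PrimeInt C => a ≤ e.1.1 ∧ e.1.2 ≤ b)).sup σ

/-- The subset of `D` represented by the colored chain `(C, σ)`. -/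
noncomputable def repSet {C D : Type} [LinearOrder C] [Fintype C]
    [Lattice D] [OrderBot D] (σ : PrimeInt C → D) : Set D :=
  {x : D | ∃ a b : C, a ≤ b ∧ x = chainRep σ a b}

/-!
For an antichain `q` of join-irreducibles, `p = ⋁ qᵢ` is represented, say `p = rep [a, b]`.
Growing the interval `[a, c]` one covering pair at a time, there is a last step `c' ⋖ c` where
the represented element jumps to `p`: then `p = x ⊔ σ e` with `x = rep [a, c'] < p` again
represented. In a distributive lattice join-irreducible elements are join-prime, so both the
color `σ e` and `x` (which is `⊥` or join-irreducible) lie below single members `qᵢ`, `qⱼ` of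
the antichain. A third member `q_k` would then lie below `qᵢ ⊔ qⱼ`, hence below `qᵢ` or `qⱼ`,
which the antichain forbids.
-/

open Finset

section Chain

variable {C D : Type} [LinearOrder C] [Fintype C] [Lattice D] [OrderBot D]

lemma chainRep_self (σ : PrimeInt C → D) (a : C) : chainRep σ a a = ⊥ := by
  refine (Finset.sup_eq_bot_iff _ _).2 fun e he => ?_
  simp only [mem_filter, mem_univ, true_and] at he
  exact absurd (he.2.trans he.1) e.2.1.not_ge

lemma chainRep_eq_sup_of_covBy (σ : PrimeInt C → D) {a c d : C} (hac : a ≤ c) (hcd : c ⋖ d) :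
    chainRep σ a d = chainRep σ a c ⊔ σ ⟨(c, d), hcd⟩ := by
  have hfilter : univ.filter (fun e : PrimeInt C => a ≤ e.1.1 ∧ e.1.2 ≤ d) =
      insert ⟨(c, d), hcd⟩ (univ.filter fun e : PrimeInt C => a ≤ e.1.1 ∧ e.1.2 ≤ c) := by
    ext ⟨⟨u, v⟩, huv⟩
    simp only [mem_filter, mem_univ, true_and, mem_insert, Subtype.mk.injEq, Prod.mk.injEq]
    constructor
    · rintro ⟨hau, hvd⟩
      rcases le_or_gt v c with hvc | hcv
      · exact Or.inr ⟨hau, hvc⟩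
      · have hv : v = d := le_antisymm hvd (hcd.ge_of_gt hcv)
        subst hv
        exact Or.inl ⟨huv.unique_left hcd, rfl⟩
    · rintro (⟨rfl, rfl⟩ | ⟨hau, hvc⟩)
      exacts [⟨hac, le_rfl⟩, ⟨hau, hvc.trans hcd.le⟩]
  rw [chainRep, hfilter, sup_insert, sup_comm]
  rfl

lemma exists_mem_repSet_sup_eq (σ : PrimeInt C → D) {x : D} (hx : x ∈ repSet σ)
    (hx0 : x ≠ ⊥) :
    ∃ y ∈ repSet σ, y ≠ x ∧ ∃ e : PrimeInt C, x = y ⊔ σ e := by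
  obtain ⟨a, b, hab, rfl⟩ := hx
  obtain ⟨c, ⟨hac, hc⟩, hmin⟩ := wellFounded_lt.has_min
    {c | a ≤ c ∧ chainRep σ a c = chainRep σ a b} ⟨b, hab, rfl⟩
  have hac' : a < c := hac.lt_of_ne fun h => hx0 (by rw [← hc, ← h, chainRep_self])
  obtain ⟨c', hac', hc'c⟩ := exists_le_covBy_of_lt hac'
  refine ⟨chainRep σ a c', ⟨a, c', hac', rfl⟩, fun h => hmin c' ⟨hac', h⟩ hc'c.lt,
    ⟨(c', c), hc'c⟩, ?_⟩
  rw [← hc, chainRep_eq_sup_of_covBy σ hac' hc'c]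

end Chain

section Antichain

variable {D ι : Type} [DistribLattice D] [BoundedOrder D] [Fintype ι]

lemma exists_ne_ne_of_three_le_card (hι : 3 ≤ Fintype.card ι) (i j : ι) :
    ∃ k, k ≠ i ∧ k ≠ j := by
  obtain ⟨k, -, hk⟩ := exists_mem_notMem_of_card_lt_card (s := {i, j}) (t := univ)
    ((card_le_two).trans_lt (by rwa [card_univ]))
  simp only [mem_insert, mem_singleton, not_or] at hk
  exact ⟨k, hk⟩

lemma not_sup_le_sup_of_ne_ne {q : ι → D} (hq : ∀ i, SupIrred (q i))
    (hanti : ∀ i j, q i ≤ q j → i = j) {i j k : ι} (hki : k ≠ i) (hkj : k ≠ j) :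
    ¬ univ.sup q ≤ q i ⊔ q j := fun h =>
  ((hq k).supPrime.2 ((le_sup (mem_univ k)).trans h)).elim
    (fun h => hki (hanti k i h)) (fun h => hkj (hanti k j h))

lemma exists_le_apply_of_mem_of_lt_sup [Nonempty ι] {q : ι → D} {x : D}
    (hx : x ∈ {y : D | SupIrred y} ∪ {⊥, ⊤, univ.sup q}) (hxq : x < univ.sup q) :
    ∃ i, x ≤ q i := by
  rcases hx with hx | rfl | rfl | rfl
  · obtain ⟨i, -, hi⟩ := hx.supPrime.le_finset_sup.1 hxq.le
    exact ⟨i, hi⟩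
  · exact ⟨Classical.arbitrary ι, bot_le⟩
  · exact absurd hxq not_top_lt
  · exact absurd hxq (lt_irrefl _)

theorem repSet_ne_of_three_le_card {C : Type} [LinearOrder C] [Fintype C]
    (q : ι → D) (hq : ∀ i, SupIrred (q i)) (hanti : ∀ i j, q i ≤ q j → i = j)
    (hι : 3 ≤ Fintype.card ι) (σ : PrimeInt C → D) (hσ : ∀ e, SupIrred (σ e)) :
    repSet σ ≠ {x : D | SupIrred x} ∪ {⊥, ⊤, univ.sup q} := by
  intro hrep
  have : Nonempty ι := Fintype.card_pos_iff.1 (by omega)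
  have hp : univ.sup q ∈ repSet σ := hrep ▸ Or.inr (by simp)
  have hp0 : univ.sup q ≠ ⊥ :=
    ne_bot_of_le_ne_bot (hq (Classical.arbitrary ι)).ne_bot (le_sup (mem_univ _))
  obtain ⟨x, hx, hxp, e, hpx⟩ := exists_mem_repSet_sup_eq σ hp hp0
  obtain ⟨i, hi⟩ := exists_le_apply_of_mem_of_lt_sup (hrep ▸ hx)
    (lt_of_le_of_ne (hpx ▸ le_sup_left) hxp)
  obtain ⟨j, -, hj⟩ := (hσ e).supPrime.le_finset_sup.1 (hpx ▸ le_sup_right)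
  obtain ⟨k, hki, hkj⟩ := exists_ne_ne_of_three_le_card hι i j
  exact not_sup_le_sup_of_ne_ne hq hanti hki hkj (hpx ▸ sup_le_sup hi hj)

end Antichain

theorem stmt_11_general {D : Type} [DistribLattice D] [BoundedOrder D]
    (p₀ p₁ p₂ : D) (h0 : SupIrred p₀) (h1 : SupIrred p₁) (h2 : SupIrred p₂)
    (ha01 : ¬ p₀ ≤ p₁) (ha10 : ¬ p₁ ≤ p₀) (ha02 : ¬ p₀ ≤ p₂) (ha20 : ¬ p₂ ≤ p₀)
    (ha12 : ¬ p₁ ≤ p₂) (ha21 : ¬ p₂ ≤ p₁)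
    (C : Type) [LinearOrder C] [Fintype C]
    (σ : PrimeInt C → D) (hJ : ∀ e : PrimeInt C, SupIrred (σ e)) :
    repSet σ ≠ {x : D | SupIrred x} ∪ {⊥, ⊤, p₀ ⊔ p₁ ⊔ p₂} := by
  have hsup : univ.sup ![p₀, p₁, p₂] = p₀ ⊔ p₁ ⊔ p₂ := by
    simp [Fin.univ_succ, sup_assoc]
  rw [← hsup]
  refine repSet_ne_of_three_le_card _ (fun i => ?_) (fun i j => ?_) (by simp) σ hJ
  · fin_cases i <;> assumption
  · fin_cases i <;> fin_cases j <;> simp [*]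

/-- If a finite distributive lattice `D` contains a three-element antichain of
join-irreducible elements `p₀, p₁, p₂`, then the inclusion
`J(D) ∪ {⊥, ⊤, p₀ ⊔ p₁ ⊔ p₂} ⊆ D` is not chain-representable. -/
theorem stmt_11 {D : Type} [DistribLattice D] [Fintype D] [BoundedOrder D]
    (p₀ p₁ p₂ : D) (h0 : SupIrred p₀) (h1 : SupIrred p₁) (h2 : SupIrred p₂)
    (ha01 : ¬ p₀ ≤ p₁) (ha10 : ¬ p₁ ≤ p₀) (ha02 : ¬ p₀ ≤ p₂) (ha20 : ¬ p₂ ≤ p₀)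
    (ha12 : ¬ p₁ ≤ p₂) (ha21 : ¬ p₂ ≤ p₁)
    (C : Type) [LinearOrder C] [Fintype C] [Nonempty C]
    (σ : PrimeInt C → D) (hJ : ∀ e : PrimeInt C, SupIrred (σ e))
    (hsurj : ∀ x : D, SupIrred x → ∃ e : PrimeInt C, σ e = x) :
    repSet σ ≠ {x : D | SupIrred x} ∪ {⊥, ⊤, p₀ ⊔ p₁ ⊔ p₂} :=
  stmt_11_general p₀ p₁ p₂ h0 h1 h2 ha01 ha10 ha02 ha20 ha12 ha21 C σ hJ
end

section
/- Let A be an algebra with finite congruence lattice D = Con(A) such that Princ(A) corresponds to J(D) ∪ {0, 1, ε} for some element ε ∈ D. Suppose α, β ∈ J(D) satisfy: every join-irreducible congruence of D lies below α or below β; α ≰ ε ∨ β; and β ≰ ε ∨ α. Then for every block U of the congruence ε, either U × U ⊆ α or U × U ⊆ β. -/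
set_option linter.unusedVariables false

/-
It suffices to show `ε ≤ α` or `ε ≤ β`. Suppose neither holds, and write `ε = con(x, y)` and
`⊤ = con(m, n)`. Put `φ = ε ⊔ α` and `ψ = ε ⊔ β`; these are proper since `β ≰ ε ⊔ α` and
`α ≰ ε ⊔ β`. Every principal congruence lies below `α` or `β`, equals `ε`, or is `⊤`; comparing
`con(w, x)` with `con(w, y)` shows that the `φ`-block and the `ψ`-block of `x` coincide. That block
is therefore closed under both `φ` and `ψ`, hence under `φ ⊔ ψ`, which is `⊤` because every
congruence is a join of join-irreducibles and so lies below `α ⊔ β`. Thus `m φ x φ n`, i.e.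
`⊤ = con(m, n) ≤ φ`, a contradiction.
-/

open Relation

theorem Relation.ReflTransGen.apply_of_forall_update {ι α β : Type*} [Fintype ι] [DecidableEq ι]
    {r : α → α → Prop} {s : β → β → Prop} (F : (ι → α) → β)
    (hF : ∀ g i a b, r a b → s (F (Function.update g i a)) (F (Function.update g i b)))
    {x y : ι → α} (h : ∀ i, ReflTransGen r (x i) (y i)) : ReflTransGen s (F x) (F y) := by
  suffices ∀ t : Finset ι, ReflTransGen s (F x) (F (t.piecewise y x)) by
    simpa using this Finset.univ
  intro t
  induction t using Finset.induction_on with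
  | empty => simpa using ReflTransGen.refl
  | insert i t hi ih =>
    have step : ReflTransGen s (F (Function.update (t.piecewise y x) i (x i)))
        (F (Function.update (t.piecewise y x) i (y i))) :=
      (h i).lift (fun a => F (Function.update (t.piecewise y x) i a)) (hF _ i)
    rw [← Finset.piecewise_eq_of_notMem t y x hi, Function.update_eq_self] at step
    rw [Finset.piecewise_insert]
    exact ih.trans step

lemma le_of_forall_supIrred_le {L : Type*} [Lattice L] [OrderBot L] [WellFoundedLT L] {a : L}
    (h : ∀ b, SupIrred b → b ≤ a) (c : L) : c ≤ a := by
  obtain ⟨s, rfl, hs⟩ := exists_supIrred_decomposition c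
  exact Finset.sup_le fun b hb => h b (hs hb)

namespace AlgCon

variable {A : Alg}

lemma algPrinc_le_iff {a b : A.carrier} {θ : AlgCon A} : algPrinc A a b ≤ θ ↔ θ.1 a b :=
  ⟨fun h => h a b fun _ hr => hr, fun h => sInf_le h⟩

lemma algPrinc_comm (a b : A.carrier) : algPrinc A a b = algPrinc A b a :=
  le_antisymm (algPrinc_le_iff.2 ((algPrinc A b a).2.1.symm (algPrinc_le_iff.1 le_rfl)))
    (algPrinc_le_iff.2 ((algPrinc A a b).2.1.symm (algPrinc_le_iff.1 le_rfl)))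

lemma algPrinc_le_sup (a b c : A.carrier) :
    algPrinc A a c ≤ algPrinc A a b ⊔ algPrinc A b c :=
  algPrinc_le_iff.2 <| (algPrinc A a b ⊔ algPrinc A b c).2.1.trans
    (algPrinc_le_iff.1 le_sup_left) (algPrinc_le_iff.1 le_sup_right)

lemma top_rel (a b : A.carrier) : (⊤ : AlgCon A).1 a b :=
  fun _ h => h.elim

lemma isCong_reflTransGen_or (θ ρ : AlgCon A) :
    IsCong A (ReflTransGen fun u v => θ.1 u v ∨ ρ.1 u v) := by
  refine ⟨⟨fun _ => .refl, fun h => ?_, .trans⟩, fun i x y h => ?_⟩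
  · exact ReflTransGen.mono (fun _ _ => Or.imp θ.2.1.symm ρ.2.1.symm) _ _
      (ReflTransGen.swap _ _ h)
  · refine ReflTransGen.apply_of_forall_update (A.ops i) (fun g j a b hab => ?_) h
    have hupd (σ : AlgCon A) (hσ : σ.1 a b) :
        ∀ k, σ.1 (Function.update g j a k) (Function.update g j b k) := by
      intro k
      rcases eq_or_ne k j with rfl | hk
      · simpa using hσ
      · simpa [hk] using σ.2.1.refl (g k)
    exact hab.imp (fun hθ => θ.2.2 i _ _ (hupd θ hθ)) (fun hρ => ρ.2.2 i _ _ (hupd ρ hρ))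

lemma mem_of_sup_rel {θ ρ : AlgCon A} {S : Set A.carrier}
    (hθ : ∀ u v, θ.1 u v → v ∈ S → u ∈ S) (hρ : ∀ u v, ρ.1 u v → v ∈ S → u ∈ S)
    {u v : A.carrier} (huv : (θ ⊔ ρ).1 u v) (hv : v ∈ S) : u ∈ S := by
  let chains : AlgCon A := ⟨_, isCong_reflTransGen_or θ ρ⟩
  have hθρ : θ ⊔ ρ ≤ chains :=
    sup_le (fun _ _ h => .single (Or.inl h)) (fun _ _ h => .single (Or.inr h))
  have hchain : chains.1 u v := hθρ u v huv
  clear huv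
  induction hchain using ReflTransGen.head_induction_on with
  | refl => exact hv
  | head hstep _ ih => exact hstep.elim (hθ _ _ · ih) (hρ _ _ · ih)

section PrincipalCases

variable {α β ε : AlgCon A}

lemma algPrinc_cases (hPrinc : AlgPrinc A = {θ : AlgCon A | SupIrred θ} ∪ {⊥, ⊤, ε})
    (hmax : ∀ γ : AlgCon A, SupIrred γ → γ ≤ α ∨ γ ≤ β) (a b : A.carrier) :
    algPrinc A a b ≤ α ∨ algPrinc A a b ≤ β ∨ algPrinc A a b = ε ∨ algPrinc A a b = ⊤ := by
  have hmem : algPrinc A a b ∈ AlgPrinc A := ⟨a, b, rfl⟩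
  rw [hPrinc] at hmem
  rcases hmem with hirr | hbot | htop | hε
  · exact (hmax _ hirr).imp_right Or.inl
  · exact Or.inl (le_of_eq_of_le hbot bot_le)
  · exact Or.inr (Or.inr (Or.inr htop))
  · exact Or.inr (Or.inr (Or.inl hε))

lemma rel_sup_of_rel_sup {x y : A.carrier}
    (hcls : ∀ a b, algPrinc A a b ≤ α ∨ algPrinc A a b ≤ β ∨
      algPrinc A a b = algPrinc A x y ∨ algPrinc A a b = ⊤)
    (hεα : ¬ algPrinc A x y ≤ α) (hφ : algPrinc A x y ⊔ α ≠ ⊤) {w : A.carrier}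
    (hw : (algPrinc A x y ⊔ α).1 w x) : (algPrinc A x y ⊔ β).1 w x := by
  set ε := algPrinc A x y
  have hyx : (ε ⊔ β).1 y x :=
    (ε ⊔ β).2.1.symm (algPrinc_le_iff.1 (le_sup_left : ε ≤ ε ⊔ β))
  suffices algPrinc A w x ≤ ε ⊔ β ∨ algPrinc A w y ≤ ε ⊔ β by
    rcases this with h | h
    · exact algPrinc_le_iff.1 h
    · exact (ε ⊔ β).2.1.trans (algPrinc_le_iff.1 h) hyx
  have hne {z : A.carrier} (h : algPrinc A w z ≤ ε ⊔ α) : algPrinc A w z ≠ ⊤ :=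
    fun htop => hφ (top_unique (htop ▸ h))
  have hwx : algPrinc A w x ≤ ε ⊔ α := algPrinc_le_iff.2 hw
  have hwy : algPrinc A w y ≤ ε ⊔ α :=
    (algPrinc_le_sup w x y).trans (sup_le hwx le_sup_left)
  rcases hcls w x with h | h | h | h
  · rcases hcls w y with h' | h' | h' | h'
    · refine absurd ?_ hεα
      calc ε ≤ algPrinc A x w ⊔ algPrinc A w y := algPrinc_le_sup x w y
        _ ≤ α := sup_le (algPrinc_comm x w ▸ h) h'
    · exact Or.inr (h'.trans le_sup_right)
    · exact Or.inr (h'.le.trans le_sup_left)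
    · exact absurd h' (hne hwy)
  · exact Or.inl (h.trans le_sup_right)
  · exact Or.inl (h.le.trans le_sup_left)
  · exact absurd h (hne hwx)

lemma le_or_le_of_algPrinc_cases
    (hcls : ∀ a b, algPrinc A a b ≤ α ∨ algPrinc A a b ≤ β ∨
      algPrinc A a b = ε ∨ algPrinc A a b = ⊤)
    (hεP : ε ∈ AlgPrinc A) (htopP : (⊤ : AlgCon A) ∈ AlgPrinc A) (htop : ⊤ ≤ α ⊔ β)
    (hαε : ¬ α ≤ ε ⊔ β) (hβε : ¬ β ≤ ε ⊔ α) : ε ≤ α ∨ ε ≤ β := by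
  by_contra! ⟨hεα, hεβ⟩
  obtain ⟨x, y, rfl⟩ := hεP
  obtain ⟨m, n, hmn⟩ := htopP
  set ε := algPrinc A x y
  have hφ : ε ⊔ α ≠ ⊤ := fun h => hβε (h ▸ le_top)
  have hψ : ε ⊔ β ≠ ⊤ := fun h => hαε (h ▸ le_top)
  have hφψ {w : A.carrier} : (ε ⊔ α).1 w x → (ε ⊔ β).1 w x := rel_sup_of_rel_sup hcls hεα hφ
  have hψφ {w : A.carrier} : (ε ⊔ β).1 w x → (ε ⊔ α).1 w x :=
    rel_sup_of_rel_sup (fun a b => or_left_comm.1 (hcls a b)) hεβ hψ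
  have hblock (w : A.carrier) : (ε ⊔ α).1 w x :=
    mem_of_sup_rel (θ := ε ⊔ α) (ρ := ε ⊔ β) (S := {w | (ε ⊔ α).1 w x})
      (fun _ _ huv hv => (ε ⊔ α).2.1.trans huv hv)
      (fun _ _ huv hv => hψφ ((ε ⊔ β).2.1.trans huv (hφψ hv)))
      ((htop.trans (sup_le_sup le_sup_right le_sup_right)) w x (top_rel w x))
      ((ε ⊔ α).2.1.refl x)
  have hmn' : (ε ⊔ α).1 m n := (ε ⊔ α).2.1.trans (hblock m) ((ε ⊔ α).2.1.symm (hblock n))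
  exact hφ (top_unique (hmn ▸ algPrinc_le_iff.2 hmn'))

end PrincipalCases

end AlgCon

theorem stmt_13_general (A : Alg) [Finite (AlgCon A)] (ε α β : AlgCon A)
    (hPrinc : AlgPrinc A = {θ : AlgCon A | SupIrred θ} ∪ {⊥, ⊤, ε})
    (hmax : ∀ γ : AlgCon A, SupIrred γ → γ ≤ α ∨ γ ≤ β)
    (hαε : ¬ α ≤ ε ⊔ β) (hβε : ¬ β ≤ ε ⊔ α) :
    ∀ a : A.carrier,
      (∀ x y : A.carrier, ε.1 a x → ε.1 a y → α.1 x y) ∨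
      (∀ x y : A.carrier, ε.1 a x → ε.1 a y → β.1 x y) := by
  have hεP : ε ∈ AlgPrinc A := by simp [hPrinc]
  have htopP : (⊤ : AlgCon A) ∈ AlgPrinc A := by simp [hPrinc]
  have htop : ⊤ ≤ α ⊔ β := le_of_forall_supIrred_le
    (fun γ hγ => (hmax γ hγ).elim (·.trans le_sup_left) (·.trans le_sup_right)) ⊤
  have hεle : ε ≤ α ∨ ε ≤ β :=
    AlgCon.le_or_le_of_algPrinc_cases (AlgCon.algPrinc_cases hPrinc hmax) hεP htopP htop hαε hβε
  intro a
  exact hεle.imp (fun h x y hx hy => h x y (ε.2.1.trans (ε.2.1.symm hx) hy))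
    (fun h x y hx hy => h x y (ε.2.1.trans (ε.2.1.symm hx) hy))

/-- Suppose the set of principal congruences of an algebra `A` with finite
congruence lattice `D` is exactly `J(D) ∪ {⊥, ⊤, ε}`, and `α, β ∈ J(D)` are such
that every join-irreducible congruence lies below `α` or below `β`, with
`α ≰ ε ⊔ β` and `β ≰ ε ⊔ α`. Then every block of `ε` is contained in a single
block of `α` or in a single block of `β`. -/
theorem stmt_13 (A : Alg) [Finite (AlgCon A)] (ε α β : AlgCon A)
    (hPrinc : AlgPrinc A = {θ : AlgCon A | SupIrred θ} ∪ {⊥, ⊤, ε})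
    (hα : SupIrred α) (hβ : SupIrred β)
    (hmax : ∀ γ : AlgCon A, SupIrred γ → γ ≤ α ∨ γ ≤ β)
    (hαε : ¬ α ≤ ε ⊔ β) (hβε : ¬ β ≤ ε ⊔ α) :
    ∀ a : A.carrier,
      (∀ x y : A.carrier, ε.1 a x → ε.1 a y → α.1 x y) ∨
      (∀ x y : A.carrier, ε.1 a x → ε.1 a y → β.1 x y) :=
  stmt_13_general A ε α β hPrinc hmax hαε hβε
end

section
/- Let C be a finite chain, D a finite distributive lattice, σ: Prime(C) → J(D) a surjective coloring, and let 𝔄 be the unary algebra on the underlying set of C whose operations are all contraction maps g_{uv} for u < v in C and all forcing maps f_{p,h} for distinct prime intervals p ≠ h of C with σ(p) ≥ σ(h). Then the map φ: D → Con(𝔄) defined by φ(x) = {(u,v) : σ(q) ≤ x for every prime interval q of the interval [u∧v, u∨v]} is a lattice isomorphism from D onto the congruence lattice of 𝔄. -/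
set_option linter.unusedVariables false

open scoped Classical

/-- The contraction map of the interval `[u, v]` of a chain. -/
def contraction {C : Type} [LinearOrder C] (u v : C) (x : C) : C :=
  if v ≤ x then v else if u ≤ x then x else u

/-- The forcing map `f_{p,h}` associated with two distinct prime intervals `p`, `h`
of a chain: elements of the interior set between `p` and `h` are sent to the
endpoint of `h` adjacent to the interior set, all other elements to the other
endpoint of `h`. -/
def forcing {C : Type} [LinearOrder C] (p h : PrimeInt C) (x : C) : C :=
  if p.1.2 ≤ h.1.1 then (if p.1.2 ≤ x ∧ x ≤ h.1.1 then h.1.1 else h.1.2)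
  else (if h.1.2 ≤ x ∧ x ≤ p.1.1 then h.1.2 else h.1.1)

/-- The unary "forcing algebra" on the chain `C`, whose operations are all
contractions `g_{uv}` for `u < v` and all forcing maps `f_{p,h}` for distinct
prime intervals with `σ(p) ≥ σ(h)`. -/
def forcingAlg (C : Type) [LinearOrder C] {D : Type} [Lattice D]
    (σ : PrimeInt C → D) : Alg where
  carrier := C
  ι := {uv : C × C // uv.1 < uv.2} ⊕
    {ph : PrimeInt C × PrimeInt C // ph.1 ≠ ph.2 ∧ σ ph.2 ≤ σ ph.1}
  arity _ := 1
  ops i x :=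
    match i with
    | Sum.inl uv => contraction uv.1.1 uv.1.2 (x 0)
    | Sum.inr ph => forcing ph.1.1 ph.1.2 (x 0)

/-!
Write `q.Between u v` when the prime interval `q` lies in `[u ⊓ v, u ⊔ v]`. A prime interval
between `u` and `w` lies between `u` and `v` or between `v` and `w`, so `φ x` is an equivalence;
contractions and forcing maps preserve it because every prime interval between two images is
dominated in color by one between the arguments.

Conversely, since the chain is finite, a congruence `θ` relates `u` and `v` iff it collapses every
prime interval between them, and the forcing maps make it collapse `h` as soon as it collapses some
`p` with `σ h ≤ σ p`. Colors are join-irreducible, hence join-prime in the distributive lattice `D`,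
so `θ = φ x` for `x` the join of the colors of the collapsed prime intervals. Finally `φ` reflects
the order because every element of `D` is the join of the join-irreducibles below it, all of which
are colors.
-/

namespace PrimeInt

variable {C : Type} [LinearOrder C] {p q : PrimeInt C} {a b c : C}

def Between (q : PrimeInt C) (a b : C) : Prop :=
  a ⊓ b ≤ q.1.1 ∧ q.1.2 ≤ a ⊔ b

lemma between_comm : q.Between a b ↔ q.Between b a := by
  simp only [Between, inf_comm, sup_comm]

lemma between_of_le (hab : a ≤ b) : q.Between a b ↔ a ≤ q.1.1 ∧ q.1.2 ≤ b := by
  rw [Between, inf_eq_left.2 hab, sup_eq_right.2 hab]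

lemma not_between_self : ¬ q.Between a a := fun h =>
  (((between_of_le le_rfl).1 h).1.trans_lt q.2.1).not_ge ((between_of_le le_rfl).1 h).2

lemma eq_of_between (h : q.Between p.1.1 p.1.2) : q = p := by
  obtain ⟨h1, h2⟩ := (between_of_le p.2.1.le).1 h
  have e1 : q.1.1 = p.1.1 := le_antisymm (p.2.le_of_lt (q.2.1.trans_le h2)) h1
  have e2 : q.1.2 = p.1.2 := le_antisymm h2 (p.2.ge_of_gt (e1 ▸ q.2.1))
  exact Subtype.ext (Prod.ext e1 e2)

lemma between_self (q : PrimeInt C) : q.Between q.1.1 q.1.2 :=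
  (between_of_le q.2.1.le).2 ⟨le_rfl, le_rfl⟩

lemma Between.or (h : q.Between a c) (b : C) : q.Between a b ∨ q.Between b c := by
  simp only [Between, inf_le_iff, le_sup_iff] at *
  rcases le_or_gt b q.1.1 with hb | hb
  · grind
  · have := q.2.ge_of_gt hb
    grind

lemma le_or_le_of_ne (h : p ≠ q) : p.1.2 ≤ q.1.1 ∨ q.1.2 ≤ p.1.1 := by
  by_contra! hc
  exact h (eq_of_between ((between_of_le q.2.1.le).2
    ⟨p.2.le_of_lt hc.1, p.2.ge_of_gt hc.2⟩))

lemma between_or_between_of_mem_Icc (ha : a ∈ Set.Icc p.1.2 q.1.1)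
    (hb : b ∉ Set.Icc p.1.2 q.1.1) : p.Between a b ∨ q.Between a b := by
  simp only [Set.mem_Icc, not_and_or, not_le] at ha hb
  rcases hb with hb | hb
  · exact Or.inl ⟨inf_le_right.trans (p.2.le_of_lt hb), ha.1.trans le_sup_left⟩
  · exact Or.inr ⟨inf_le_left.trans ha.2, (q.2.ge_of_gt hb).trans le_sup_right⟩

end PrimeInt

open PrimeInt

lemma Monotone.le_and_le_of_covBy {C : Type} [LinearOrder C] {f : C → C} (hf : Monotone f)
    {s t a b : C} (hst : s ⋖ t) (hs : f s = s) (ht : f t = t) (ha : f a ≤ s) (hb : t ≤ f b) :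
    a ≤ s ∧ t ≤ b := by
  constructor
  · by_contra! h
    exact hst.1.not_ge (ht.symm.le.trans ((hf (hst.ge_of_gt h)).trans ha))
  · by_contra! h
    exact hst.1.not_ge (hb.trans ((hf (hst.le_of_lt h)).trans hs.le))

section Contraction

variable {C : Type} [LinearOrder C] {u v x : C}

lemma contraction_eq_sup_inf (huv : u ≤ v) (x : C) : contraction u v x = x ⊓ v ⊔ u := by
  unfold contraction
  split_ifs with h1 h2
  · rw [inf_eq_right.2 h1, sup_eq_left.2 huv]
  · rw [inf_eq_left.2 (not_le.1 h1).le, sup_eq_left.2 h2]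
  · rw [inf_eq_left.2 ((not_le.1 h2).le.trans huv), sup_eq_right.2 (not_le.1 h2).le]

lemma contraction_monotone (huv : u ≤ v) : Monotone (contraction u v) := fun a b hab => by
  simp only [contraction_eq_sup_inf huv]
  gcongr

lemma contraction_mem_Icc (huv : u ≤ v) (x : C) : contraction u v x ∈ Set.Icc u v := by
  rw [contraction_eq_sup_inf huv]
  exact ⟨le_sup_right, sup_le inf_le_right huv⟩

lemma contraction_of_mem_Icc (hx : x ∈ Set.Icc u v) : contraction u v x = x := by
  rw [contraction_eq_sup_inf (hx.1.trans hx.2), inf_eq_left.2 hx.2, sup_eq_left.2 hx.1]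

lemma contraction_of_le_left (huv : u ≤ v) (hx : x ≤ u) : contraction u v x = u := by
  rw [contraction_eq_sup_inf huv, inf_eq_left.2 (hx.trans huv), sup_eq_right.2 hx]

lemma contraction_of_right_le (huv : u ≤ v) (hx : v ≤ x) : contraction u v x = v := by
  rw [contraction_eq_sup_inf huv, inf_eq_right.2 hx, sup_eq_left.2 huv]

lemma PrimeInt.Between.of_contraction {q : PrimeInt C} {a b : C} (huv : u ≤ v)
    (h : q.Between (contraction u v a) (contraction u v b)) : q.Between a b := by
  wlog hab : a ≤ b generalizing a b
  · exact between_comm.2 (this (between_comm.2 h) (le_of_not_ge hab))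
  have hg := contraction_monotone huv
  obtain ⟨h1, h2⟩ := (between_of_le (hg hab)).1 h
  have hq1 : q.1.1 ∈ Set.Icc u v :=
    ⟨(contraction_mem_Icc huv a).1.trans h1,
      (q.2.1.le.trans h2).trans (contraction_mem_Icc huv b).2⟩
  have hq2 : q.1.2 ∈ Set.Icc u v :=
    ⟨hq1.1.trans q.2.1.le, h2.trans (contraction_mem_Icc huv b).2⟩
  exact (between_of_le hab).2 (hg.le_and_le_of_covBy q.2
    (contraction_of_mem_Icc hq1) (contraction_of_mem_Icc hq2) h1 h2)

end Contraction

section Forcing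

variable {C : Type} [LinearOrder C] {p h : PrimeInt C}

lemma forcing_eq_fst_or_eq_snd (x : C) : forcing p h x = h.1.1 ∨ forcing p h x = h.1.2 := by
  unfold forcing
  split_ifs <;> simp

lemma forcing_fst_snd (hne : p ≠ h) :
    forcing p h p.1.1 = h.1.2 ∧ forcing p h p.1.2 = h.1.1 := by
  have hp := p.2.1
  rcases le_or_le_of_ne hne with hc | hc
  · simp only [forcing, le_rfl, hc, if_true, hp.not_ge, false_and, if_false, and_self]
  · have hnc : ¬ p.1.2 ≤ h.1.1 := fun hc' => (hp.trans_le hc').not_ge (h.2.1.le.trans hc)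
    simp only [forcing, hnc, if_false, hc, le_rfl, if_true, hp.not_ge, and_false, and_self]

lemma PrimeInt.between_or_between_of_forcing_ne {a b : C}
    (hne : forcing p h a ≠ forcing p h b) : p.Between a b ∨ h.Between a b := by
  unfold forcing at hne
  split_ifs at hne <;> first | exact absurd rfl hne | rename_i ha hb
  · exact between_or_between_of_mem_Icc ha hb
  · exact (between_or_between_of_mem_Icc hb ha).imp between_comm.1 between_comm.1
  · exact (between_or_between_of_mem_Icc ha hb).symm
  · exact ((between_or_between_of_mem_Icc hb ha).imp between_comm.1 between_comm.1).symm

end Forcing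

section ColorRel

variable {C : Type} [LinearOrder C] {D : Type}

def colorRel [LE D] (σ : PrimeInt C → D) (x : D) (u v : C) : Prop :=
  ∀ q : PrimeInt C, q.Between u v → σ q ≤ x

variable [Preorder D] {σ : PrimeInt C → D} {x : D}

variable (σ x) in
lemma colorRel_equivalence : Equivalence (colorRel σ x) where
  refl _ _ hq := absurd hq not_between_self
  symm h q hq := h q (between_comm.1 hq)
  trans {_ b _} h₁ h₂ q hq := (hq.or b).elim (h₁ q) (h₂ q)

lemma colorRel_prime_iff (q : PrimeInt C) : colorRel σ x q.1.1 q.1.2 ↔ σ q ≤ x :=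
  ⟨fun h => h q (between_self q), fun h _ hq' => (eq_of_between hq') ▸ h⟩

lemma colorRel_map {f : C → C}
    (hf : ∀ a b (q : PrimeInt C), q.Between (f a) (f b) → ∃ q', q'.Between a b ∧ σ q ≤ σ q')
    {a b : C} (h : colorRel σ x a b) : colorRel σ x (f a) (f b) := fun q hq => by
  obtain ⟨q', hq', hle⟩ := hf a b q hq
  exact hle.trans (h q' hq')

lemma colorRel_contraction {u v : C} (huv : u ≤ v) {a b : C} (h : colorRel σ x a b) :
    colorRel σ x (contraction u v a) (contraction u v b) :=
  colorRel_map (fun _ _ q hq => ⟨q, hq.of_contraction huv, le_rfl⟩) h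

lemma colorRel_forcing {p h : PrimeInt C} (hσ : σ h ≤ σ p) {a b : C} (hab : colorRel σ x a b) :
    colorRel σ x (forcing p h a) (forcing p h b) := by
  refine colorRel_map (fun a b q hq => ?_) hab
  have hne : forcing p h a ≠ forcing p h b := fun he => not_between_self (he ▸ hq)
  -- the image `{h.1, h.2}` of `forcing p h` contains no prime interval but `h`
  have hqh : q = h := by
    rcases forcing_eq_fst_or_eq_snd (p := p) (h := h) a with ea | ea <;>
      rcases forcing_eq_fst_or_eq_snd (p := p) (h := h) b with eb | eb <;>
      rw [ea, eb] at hne hq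
    all_goals first
      | exact absurd rfl hne
      | exact eq_of_between hq
      | exact eq_of_between (between_comm.1 hq)
  subst hqh
  rcases between_or_between_of_forcing_ne hne with hp | hh
  · exact ⟨p, hp, hσ⟩
  · exact ⟨q, hh, le_rfl⟩

end ColorRel

lemma rel_of_forall_covBy {C : Type} [PartialOrder C] [Finite C] {r : C → C → Prop}
    (hrefl : ∀ a, r a a) (htrans : ∀ {a b c}, r a b → r b c → r a c) {u v : C} (huv : u ≤ v)
    (H : ∀ q : PrimeInt C, u ≤ q.1.1 → q.1.2 ≤ v → r q.1.1 q.1.2) : r u v := by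
  induction u using WellFoundedGT.induction with
  | _ u ih =>
    rcases huv.eq_or_lt with rfl | hlt
    · exact hrefl u
    obtain ⟨w, huw, hwv⟩ := exists_covBy_le_of_lt hlt
    exact htrans (H ⟨(u, w), huw⟩ le_rfl hwv)
      (ih w huw.1 hwv fun q hq hqv => H q (huw.1.le.trans hq) hqv)

section Con

variable {C : Type} [LinearOrder C] {D : Type} [Lattice D] {σ : PrimeInt C → D}

variable (σ) in
lemma isCong_colorRel (x : D) :
    IsCong (forcingAlg C σ) (colorRel (C := C) σ x) := by
  refine ⟨?_, ?_⟩
  · exact colorRel_equivalence σ x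
  rintro (uv | ph) a b hab
  · exact colorRel_contraction uv.2.le (hab ⟨0, Nat.one_pos⟩)
  · exact colorRel_forcing ph.2.2 (hab ⟨0, Nat.one_pos⟩)

variable {r : C → C → Prop} (hr : IsCong (forcingAlg C σ) r)
include hr

lemma IsCong.equivalence : Equivalence r := hr.1

lemma IsCong.rel_contraction {u v a b : C} (huv : u < v) (h : r a b) :
    r (contraction u v a) (contraction u v b) :=
  hr.2 (Sum.inl ⟨(u, v), huv⟩) (fun _ => a) (fun _ => b) fun _ => h

lemma IsCong.rel_forcing {p h : PrimeInt C} {a b : C} (hne : p ≠ h) (hσ : σ h ≤ σ p)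
    (hab : r a b) : r (forcing p h a) (forcing p h b) :=
  hr.2 (Sum.inr ⟨(p, h), hne, hσ⟩) (fun _ => a) (fun _ => b) fun _ => hab

lemma IsCong.rel_of_between {q : PrimeInt C} {a b : C} (hab : r a b) (hq : q.Between a b) :
    r q.1.1 q.1.2 := by
  wlog hle : a ≤ b generalizing a b
  · exact this (hr.equivalence.symm hab) (between_comm.1 hq) (le_of_not_ge hle)
  obtain ⟨h1, h2⟩ := (between_of_le hle).1 hq
  have := hr.rel_contraction q.2.1 hab
  rwa [contraction_of_le_left q.2.1.le h1, contraction_of_right_le q.2.1.le h2] at this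

lemma IsCong.rel_of_forcing {p h : PrimeInt C} (hp : r p.1.1 p.1.2) (hne : p ≠ h)
    (hσ : σ h ≤ σ p) : r h.1.1 h.1.2 := by
  have := hr.rel_forcing hne hσ hp
  rw [(forcing_fst_snd hne).1, (forcing_fst_snd hne).2] at this
  exact hr.equivalence.symm this

lemma IsCong.rel_iff_forall_between [Finite C] {u v : C} :
    r u v ↔ ∀ q : PrimeInt C, q.Between u v → r q.1.1 q.1.2 := by
  refine ⟨fun h q hq => hr.rel_of_between h hq, fun H => ?_⟩
  wlog hle : u ≤ v generalizing u v
  · exact hr.equivalence.symm (this (fun q hq => H q (between_comm.1 hq)) (le_of_not_ge hle))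
  exact rel_of_forall_covBy hr.equivalence.refl hr.equivalence.trans hle
    fun q h1 h2 => H q ((between_of_le hle).2 ⟨h1, h2⟩)

end Con

lemma le_of_forall_supIrred_le_s14 {D : Type} [SemilatticeSup D] [OrderBot D] [WellFoundedLT D]
    {x y : D} (H : ∀ j : D, SupIrred j → j ≤ x → j ≤ y) : x ≤ y := by
  obtain ⟨s, rfl, hs⟩ := exists_supIrred_decomposition x
  exact Finset.sup_le fun j hj => H j (hs hj) (Finset.le_sup (f := id) hj)

section ColorCon

variable {C : Type} [LinearOrder C] {D : Type} [Lattice D] {σ : PrimeInt C → D}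

variable (σ) in
/-- The map `φ` of the theorem. -/
def colorCon (x : D) : AlgCon (forcingAlg C σ) := ⟨colorRel (C := C) σ x, isCong_colorRel σ x⟩

lemma colorCon_rel {x : D} {u v : C} : (colorCon σ x).1 u v ↔ colorRel σ x u v := Iff.rfl

lemma colorCon_le_colorCon_iff [OrderBot D] [Finite D]
    (hsurj : ∀ x : D, SupIrred x → ∃ e : PrimeInt C, σ e = x) {x y : D} :
    colorCon σ x ≤ colorCon σ y ↔ x ≤ y := by
  refine ⟨fun h => le_of_forall_supIrred_le_s14 fun j hj hjx => ?_,
    fun hxy _ _ h => colorCon_rel.2 fun q hq => (colorCon_rel.1 h q hq).trans hxy⟩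
  obtain ⟨e, rfl⟩ := hsurj j hj
  exact (colorRel_prime_iff e).1
    (colorCon_rel.1 (h _ _ (colorCon_rel.2 ((colorRel_prime_iff e).2 hjx))))

end ColorCon

lemma colorCon_surjective {C : Type} [LinearOrder C] [Fintype C] {D : Type} [DistribLattice D]
    [OrderBot D] {σ : PrimeInt C → D} (hJ : ∀ e : PrimeInt C, SupIrred (σ e)) :
    Function.Surjective (colorCon σ) := by
  intro θ
  set x := (Finset.univ.filter fun q : PrimeInt C => θ.1 q.1.1 q.1.2).sup σ
  have hx : ∀ q : PrimeInt C, σ q ≤ x ↔ θ.1 q.1.1 q.1.2 := by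
    refine fun q => ⟨fun hq => ?_,
      fun hq => Finset.le_sup (Finset.mem_filter.2 ⟨Finset.mem_univ _, hq⟩)⟩
    obtain ⟨p, hp, hqp⟩ := (hJ q).supPrime.le_finset_sup.1 hq
    replace hp := (Finset.mem_filter.1 hp).2
    rcases eq_or_ne p q with rfl | hpq
    · exact hp
    · exact θ.2.rel_of_forcing hp hpq hqp
  refine ⟨x, le_antisymm (fun u v h => ?_) (fun u v h => colorCon_rel.2 fun q hq => ?_)⟩
  · exact θ.2.rel_iff_forall_between.2 fun q hq => (hx q).1 (colorCon_rel.1 h q hq)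
  · exact (hx q).2 (θ.2.rel_of_between h hq)

/-- The map `φ(x) = {(u,v) : σ(q) ≤ x for all prime intervals q of [u⊓v, u⊔v]}`
is a lattice isomorphism from `D` onto the congruence lattice of the forcing
algebra. -/
theorem stmt_14 (C : Type) [LinearOrder C] [Fintype C]
    {D : Type} [DistribLattice D] [Fintype D] [BoundedOrder D]
    (σ : PrimeInt C → D) (hJ : ∀ e : PrimeInt C, SupIrred (σ e))
    (hsurj : ∀ x : D, SupIrred x → ∃ e : PrimeInt C, σ e = x) :
    ∃ φ : D ≃o AlgCon (forcingAlg C σ),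
      ∀ (x : D) (u v : C),
        (φ x).1 u v ↔
          ∀ q : PrimeInt C, u ⊓ v ≤ q.1.1 → q.1.2 ≤ u ⊔ v → σ q ≤ x := by
  refine ⟨OrderIso.ofSurjective
    (OrderEmbedding.ofMapLEIff (colorCon σ) fun _ _ => colorCon_le_colorCon_iff hsurj)
    (colorCon_surjective hJ), fun x u v => ?_⟩
  exact colorCon_rel.trans (forall_congr' fun q => and_imp)
end

section
/- Let Q be a subset of a finite distributive lattice D such that the inclusion Q ⊆ D is chain-representable by a J(D)-colored chain (C, σ). Then there is a finite algebra A with |A| = |C| and a lattice isomorphism φ: Con(A) → D such that φ(Princ(A)) = Q. -/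
/-! The algebra lives on `C` itself and has only unary operations: whenever `σ e ≤ σ f`, the map
`foldOnto f e` sends the part of the chain up to the bottom of `f` to the bottom of `e` and the rest
to the top of `e`. For `d ∈ D`, relating `a` and `b` when the colors of the prime intervals between
them all lie below `d` gives a congruence `chainCon σ d`. Conversely, a congruence collapses every
prime interval between two related elements, and collapsing `f` forces collapsing every `e` with
`σ e ≤ σ f`. Since the colors are join-prime and exhaust `J(D)`, `d ↦ chainCon σ d` is an
isomorphism `D ≃o Con(A)`, and it sends `rep [a ⊓ b, a ⊔ b]` to the principal congruence of
`(a, b)`. -/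

set_option linter.unusedVariables false

open scoped Classical

theorem CovBy.le_or_le {α : Type*} [LinearOrder α] {a b : α} (h : a ⋖ b) (c : α) :
    b ≤ c ∨ c ≤ a :=
  (lt_or_ge a c).imp h.ge_of_gt id

section ChainAlg

variable {C D : Type} [LinearOrder C] [Preorder D]

def foldOnto (f e : PrimeInt C) (x : C) : C := if x ≤ f.1.1 then e.1.1 else e.1.2

abbrev chainAlg (σ : PrimeInt C → D) : Alg where
  carrier := C
  ι := {p : PrimeInt C × PrimeInt C // σ p.2 ≤ σ p.1}
  arity _ := 1
  ops i x := foldOnto i.1.1 i.1.2 (x 0)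

variable {σ : PrimeInt C → D} (r : AlgCon (chainAlg σ))

lemma AlgCon.rel_covBy_of_rel {a b : C} (h : r.1 a b) {e : PrimeInt C}
    (h₁ : a ⊓ b ≤ e.1.1) (h₂ : e.1.2 ≤ a ⊔ b) : r.1 e.1.1 e.1.2 := by
  wlog hab : a ≤ b generalizing a b
  · exact this (r.2.1.symm h) (by rwa [inf_comm]) (by rwa [sup_comm]) (le_of_not_ge hab)
  rw [inf_eq_left.2 hab] at h₁
  rw [sup_eq_right.2 hab] at h₂
  have := r.2.2 ⟨(e, e), le_rfl⟩ (fun _ => a) (fun _ => b) (fun _ => h)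
  simpa [foldOnto, h₁, not_le.2 (e.2.lt.trans_le h₂)] using this

lemma AlgCon.rel_covBy_of_le {f e : PrimeInt C} (hfe : σ e ≤ σ f) (h : r.1 f.1.1 f.1.2) :
    r.1 e.1.1 e.1.2 := by
  have := r.2.2 ⟨(f, e), hfe⟩ (fun _ => f.1.1) (fun _ => f.1.2) (fun _ => h)
  simpa [foldOnto, not_le.2 f.2.lt] using this

lemma AlgCon.rel_of_forall_covBy [Fintype C] {a b : C}
    (h : ∀ e : PrimeInt C, a ⊓ b ≤ e.1.1 → e.1.2 ≤ a ⊔ b → r.1 e.1.1 e.1.2) : r.1 a b := by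
  wlog hab : a ≤ b generalizing a b
  · exact r.2.1.symm (this (by simpa [inf_comm, sup_comm] using h) (le_of_not_ge hab))
  let := Fintype.toLocallyFiniteOrder (α := C)
  simp only [inf_eq_left.2 hab, sup_eq_right.2 hab] at h
  induction le_iff_reflTransGen_covBy.1 hab with
  | refl => exact r.2.1.refl a
  | tail hac hcd ih =>
    have hac := le_iff_reflTransGen_covBy.2 hac
    exact r.2.1.trans (ih hac fun e h₁ h₂ => h e h₁ (h₂.trans hcd.le))
      (h ⟨(_, _), hcd⟩ hac le_rfl)

end ChainAlg

section ChainDist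

variable {C D : Type} [LinearOrder C] [Fintype C] [Lattice D] [OrderBot D]

noncomputable def chainDist (σ : PrimeInt C → D) (a b : C) : D :=
  chainRep σ (a ⊓ b) (a ⊔ b)

variable (σ : PrimeInt C → D)

lemma chainDist_le_iff {a b : C} {d : D} :
    chainDist σ a b ≤ d ↔ ∀ e : PrimeInt C, a ⊓ b ≤ e.1.1 → e.1.2 ≤ a ⊔ b → σ e ≤ d := by
  simp [chainDist, chainRep, Finset.sup_le_iff]

lemma le_chainDist {a b : C} {e : PrimeInt C} (h₁ : a ⊓ b ≤ e.1.1) (h₂ : e.1.2 ≤ a ⊔ b) :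
    σ e ≤ chainDist σ a b :=
  Finset.le_sup (Finset.mem_filter.2 ⟨Finset.mem_univ _, h₁, h₂⟩)

lemma chainDist_comm (a b : C) : chainDist σ a b = chainDist σ b a := by
  rw [chainDist, chainDist, inf_comm, sup_comm]

lemma chainDist_of_le {a b : C} (h : a ≤ b) : chainDist σ a b = chainRep σ a b := by
  rw [chainDist, inf_eq_left.2 h, sup_eq_right.2 h]

@[simp]
lemma chainDist_self (a : C) : chainDist σ a a = ⊥ :=
  le_bot_iff.1 <| (chainDist_le_iff σ).2 fun e h₁ h₂ => by
    simp only [inf_idem, sup_idem] at h₁ h₂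
    exact absurd (e.2.lt.trans_le (h₂.trans h₁)) (lt_irrefl _)

lemma chainDist_covBy (e : PrimeInt C) : chainDist σ e.1.1 e.1.2 = σ e := by
  have he : e.1.1 ≤ e.1.2 := e.2.le
  refine le_antisymm ((chainDist_le_iff σ).2 fun f h₁ h₂ => ?_) (le_chainDist σ (by simp) (by simp))
  rw [inf_eq_left.2 he] at h₁
  rw [sup_eq_right.2 he] at h₂
  have h₁' : f.1.1 ≤ e.1.1 := e.2.le_of_lt (f.2.lt.trans_le h₂)
  have h₂' : e.1.2 ≤ f.1.2 := e.2.ge_of_gt (h₁.trans_lt f.2.lt)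
  have : f = e := Subtype.ext (Prod.ext (le_antisymm h₁' h₁) (le_antisymm h₂ h₂'))
  rw [this]

-- A prime interval cannot straddle `b`.
lemma chainDist_le_sup (a b c : C) :
    chainDist σ a c ≤ chainDist σ a b ⊔ chainDist σ b c :=
  (chainDist_le_iff σ).2 fun e h₁ h₂ => by
    have hb := e.2.le_or_le b
    have : (a ⊓ b ≤ e.1.1 ∧ e.1.2 ≤ a ⊔ b) ∨ (b ⊓ c ≤ e.1.1 ∧ e.1.2 ≤ b ⊔ c) := by
      simp only [inf_le_iff, le_sup_iff] at h₁ h₂ ⊢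
      tauto
    rcases this with ⟨h₁, h₂⟩ | ⟨h₁, h₂⟩
    · exact le_sup_of_le_left (le_chainDist σ h₁ h₂)
    · exact le_sup_of_le_right (le_chainDist σ h₁ h₂)

lemma chainDist_foldOnto_le {f e : PrimeInt C} (hfe : σ e ≤ σ f) (a b : C) :
    chainDist σ (foldOnto f e a) (foldOnto f e b) ≤ chainDist σ a b := by
  wlog hab : a ≤ b generalizing a b
  · rw [chainDist_comm, chainDist_comm σ a]
    exact this b a (le_of_not_ge hab)
  by_cases hb : b ≤ f.1.1
  · simp [foldOnto, hb, hab.trans hb]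
  by_cases ha : a ≤ f.1.1
  · rw [foldOnto, foldOnto, if_pos ha, if_neg hb, chainDist_covBy]
    exact hfe.trans (le_chainDist σ (inf_le_left.trans ha)
      ((f.2.ge_of_gt (not_le.1 hb)).trans le_sup_right))
  · simp [foldOnto, ha, hb]

lemma repSet_eq_setOf_chainDist : repSet σ = {x | ∃ a b, x = chainDist σ a b} := by
  ext x
  constructor
  · rintro ⟨a, b, hab, rfl⟩
    exact ⟨a, b, (chainDist_of_le σ hab).symm⟩
  · rintro ⟨a, b, rfl⟩
    exact ⟨a ⊓ b, a ⊔ b, inf_le_sup, rfl⟩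

noncomputable def chainCon (d : D) : AlgCon (chainAlg σ) :=
  ⟨fun a b => chainDist σ a b ≤ d,
    ⟨⟨fun a => by simp, fun h => (chainDist_comm σ _ _).trans_le h,
      fun h₁ h₂ => (chainDist_le_sup σ _ _ _).trans (sup_le h₁ h₂)⟩,
    fun i x y h => (chainDist_foldOnto_le σ i.2 (x 0) (y 0)).trans (h 0)⟩⟩

lemma chainCon_rel {d : D} {a b : C} : (chainCon σ d).1 a b ↔ chainDist σ a b ≤ d := Iff.rfl

lemma chainCon_mono : Monotone (chainCon σ) := fun _ _ h _ _ hab => hab.trans h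

end ChainDist

section ConIso

variable {C D : Type} [LinearOrder C] [Fintype C] [DistribLattice D] [OrderBot D]
  (σ : PrimeInt C → D)

noncomputable def collapsedJoin (r : AlgCon (chainAlg σ)) : D :=
  (Finset.univ.filter fun e : PrimeInt C => r.1 e.1.1 e.1.2).sup σ

lemma collapsedJoin_mono : Monotone (collapsedJoin σ) := fun _ _ hrs =>
  Finset.sup_mono fun e he => by
    simp only [Finset.mem_filter, Finset.mem_univ, true_and] at he ⊢
    exact hrs _ _ he

lemma collapsedJoin_chainCon [WellFoundedLT D]
    (hsurj : ∀ x : D, SupIrred x → ∃ e : PrimeInt C, σ e = x) (d : D) :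
    collapsedJoin σ (chainCon σ d) = d := by
  have collapsed_iff (e : PrimeInt C) : (chainCon σ d).1 e.1.1 e.1.2 ↔ σ e ≤ d := by
    rw [chainCon_rel, chainDist_covBy]
  refine le_antisymm (Finset.sup_le fun e he => ?_) ?_
  · simpa [collapsed_iff] using he
  obtain ⟨s, rfl, hs⟩ := exists_supIrred_decomposition d
  refine Finset.sup_le fun x hx => ?_
  obtain ⟨e, rfl⟩ := hsurj x (hs hx)
  exact Finset.le_sup (f := σ) (Finset.mem_filter.2
    ⟨Finset.mem_univ _, (collapsed_iff e).2 (Finset.le_sup (f := (id : D → D)) hx)⟩)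

-- The colors collapsed by `r` form a down-set, cut out by its join since colors are join-prime.
lemma chainCon_collapsedJoin (hJ : ∀ e : PrimeInt C, SupIrred (σ e))
    (r : AlgCon (chainAlg σ)) : chainCon σ (collapsedJoin σ r) = r := by
  refine Subtype.ext (funext₂ fun a b => propext ⟨fun h => ?_, fun h => ?_⟩)
  · refine r.rel_of_forall_covBy fun e h₁ h₂ => ?_
    obtain ⟨f, hf, hef⟩ := (supPrime_iff_supIrred.2 (hJ e)).le_finset_sup.1
      (((chainDist_le_iff σ).1 h) e h₁ h₂)
    exact r.rel_covBy_of_le hef (Finset.mem_filter.1 hf).2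
  · exact (chainDist_le_iff σ).2 fun e h₁ h₂ => Finset.le_sup
      (Finset.mem_filter.2 ⟨Finset.mem_univ _, r.rel_covBy_of_rel h h₁ h₂⟩)

noncomputable def chainConIso [WellFoundedLT D] (hJ : ∀ e : PrimeInt C, SupIrred (σ e))
    (hsurj : ∀ x : D, SupIrred x → ∃ e : PrimeInt C, σ e = x) :
    D ≃o AlgCon (chainAlg σ) where
  toFun := chainCon σ
  invFun := collapsedJoin σ
  left_inv := collapsedJoin_chainCon σ hsurj
  right_inv := chainCon_collapsedJoin σ hJ
  map_rel_iff' {d d'} := ⟨fun h => by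
    simpa only [collapsedJoin_chainCon σ hsurj] using
      collapsedJoin_mono σ (show chainCon σ d ≤ chainCon σ d' from h),
    fun h => chainCon_mono σ h⟩

end ConIso

lemma algPrinc_eq_of_orderIso {A : Alg} {D : Type} [PartialOrder D] (ψ : D ≃o AlgCon A)
    {a b : A.carrier} {δ : D} (hψ : ∀ d, (ψ d).1 a b ↔ δ ≤ d) : algPrinc A a b = ψ δ :=
  le_antisymm (sInf_le ((hψ δ).2 le_rfl)) <| le_sInf fun r hr => by
    rw [← ψ.le_symm_apply, ← hψ, ψ.apply_symm_apply]
    exact hr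

theorem stmt_16_general {D : Type} [DistribLattice D] [Fintype D] [BoundedOrder D]
    (Q : Set D) (C : Type) [LinearOrder C] [Fintype C]
    (σ : PrimeInt C → D) (hJ : ∀ e : PrimeInt C, SupIrred (σ e))
    (hsurj : ∀ x : D, SupIrred x → ∃ e : PrimeInt C, σ e = x)
    (hrep : repSet σ = Q) :
    ∃ (A : Alg) (_ : Fintype A.carrier) (φ : AlgCon A ≃o D),
      Nat.card A.carrier = Nat.card C ∧
      (φ : AlgCon A → D) '' (AlgPrinc A) = Q := by
  set ψ := chainConIso σ hJ hsurj
  have hprinc (a b : C) : algPrinc (chainAlg σ) a b = ψ (chainDist σ a b) :=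
    algPrinc_eq_of_orderIso ψ fun _ => chainCon_rel σ
  refine ⟨chainAlg σ, (inferInstance : Fintype C), ψ.symm, rfl, ?_⟩
  rw [← hrep, repSet_eq_setOf_chainDist]
  ext x
  simp only [AlgPrinc, hprinc, Set.mem_image, Set.mem_ofPred_eq]
  constructor
  · rintro ⟨_, ⟨a, b, rfl⟩, rfl⟩
    exact ⟨a, b, ψ.symm_apply_apply _⟩
  · rintro ⟨a, b, rfl⟩
    exact ⟨_, ⟨a, b, rfl⟩, ψ.symm_apply_apply _⟩

/-- If the inclusion `Q ⊆ D` is chain-representable by a `J(D)`-colored chain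
`(C, σ)`, then it is representable by the principal congruences of a finite
algebra with exactly `|C|` elements. -/
theorem stmt_16 {D : Type} [DistribLattice D] [Fintype D] [BoundedOrder D]
    (Q : Set D) (C : Type) [LinearOrder C] [Fintype C] [Nonempty C]
    (σ : PrimeInt C → D) (hJ : ∀ e : PrimeInt C, SupIrred (σ e))
    (hsurj : ∀ x : D, SupIrred x → ∃ e : PrimeInt C, σ e = x)
    (hrep : repSet σ = Q) :
    ∃ (A : Alg) (_ : Fintype A.carrier) (φ : AlgCon A ≃o D),
      Nat.card A.carrier = Nat.card C ∧
      (φ : AlgCon A → D) '' (AlgPrinc A) = Q :=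
  stmt_16_general Q C σ hJ hsurj hrep
end
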